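/- Fix e ∈ [0,1) and suppose β₁ < β₂ in (0,1) are such that, for β ∈ [0,1], det(γ_{β,e}(2π) + I₂) = 0 holds exactly when β ∈ {β₁, β₂}. Then for i = 1, 2 the matrix M = γ_{β_i,e}(2π) has −1 as a double eigenvalue (tr M = −2 and det M = 1), M ≠ −I₂, and M is not diagonalizable over ℂ; consequently M is spectrally stable (all eigenvalues have modulus 1) but linearly unstable: sup_{n∈ℕ} ‖Mⁿ‖ = ∞. -/

import Mathlib

open Real Matrix

attribute [local instance] Matrix.normedAddCommGroup

noncomputable section

/-- The standard symplectic matrix `J = [[0,-1],[1,0]]`. -/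
def Jmat : Matrix (Fin 2) (Fin 2) ℝ := !![0, -1; 1, 0]

/-- The coefficient matrix `B_{β,e}(t) = diag(1, 1 - β/(1 + e cos t))`. -/
def Bmat (β e t : ℝ) : Matrix (Fin 2) (Fin 2) ℝ :=
  !![1, 0; 0, 1 - β / (1 + e * Real.cos t)]

/-- `γ` is the fundamental solution of `γ' = J B_{β,e} γ`, `γ(0) = I₂`
(derivative taken entrywise). -/
def IsFundSol (β e : ℝ) (γ : ℝ → Matrix (Fin 2) (Fin 2) ℝ) : Prop :=
  γ 0 = 1 ∧ ∀ (t : ℝ) (i j : Fin 2),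
    HasDerivAt (fun s => γ s i j) ((Jmat * Bmat β e t * γ t) i j) t

/-- The trace-formula function `f(β,-1)`. -/
def fTrace (β : ℝ) : ℝ :=
  β ^ 2 / (2 * (1 - β)) *
    ∫ s in (π / 2)..(3 * π / 2), ∫ t in (π / 2)..(3 * π / 2),
      Real.cos s * Real.cos t *
        (Real.cos (2 * π * Real.sqrt (1 - β) * (s - t)) ^ 2 /
            Real.cos (π * Real.sqrt (1 - β)) ^ 2 -
          Real.cos (4 * π * Real.sqrt (1 - β) * (s - t + 1 / 4)) /
            Real.cos (π * Real.sqrt (1 - β)))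

/-!
Since `γ` is symplectic, `det M = 1`, and `det (M + 1) = 0` then forces `tr M = -2`, so that
`(M + 1)² = 0` by Cayley–Hamilton. Hence `-1` is the only eigenvalue, `M` is diagonalizable only if
`M = -1`, and otherwise `Mⁿ = (-1)ⁿ (1 - n (M + 1))` grows linearly.

The substance is `M ≠ -1`. If the monodromy at one degenerate parameter were `-1`, an eigenvector
`w` for `-1` at the other one would be a common `-1`-eigenvector of both monodromies. Along
`γ_β(t) w` the Prüfer angle `θ_β` of the Hill equation `y'' + (1 - β / (1 + e cos t)) y = 0`
advances over a period by an odd multiple of `π`, since the solution is antiperiodic; by more than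
`-π`, since multiples of `π` can only be crossed upwards; and by less than `2π`, by Sturm comparison
with `β = 0`. So it advances by exactly `π` for both parameters, contradicting the strict Sturm
comparison between them.
-/

theorem nonneg_of_neg_mul_abs_le_deriv {f f' : ℝ → ℝ} {K a b : ℝ} (hK : 0 ≤ K)
    (hf : ∀ t, HasDerivAt f (f' t) t) (hbound : ∀ t, -(K * |f t|) ≤ f' t) (ha : 0 ≤ f a) :
    ∀ t ∈ Set.Icc a b, 0 ≤ f t := by
  intro t ht
  -- `-f` cannot cross the barrier `ε e^{(K+1)(s-a)}`, for any `ε > 0`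
  have hbarrier : ∀ ε > 0, -f t ≤ ε * exp ((K + 1) * (t - a)) := fun ε hε => by
    refine image_le_of_deriv_right_lt_deriv_boundary (f := fun s => -f s) (f' := fun s => -f' s)
      (B := fun s => ε * exp ((K + 1) * (s - a)))
      (B' := fun s => ε * (exp ((K + 1) * (s - a)) * (K + 1)))
      (fun s _ => (hf s).continuousAt.neg.continuousWithinAt)
      (fun s _ => (hf s).neg.hasDerivWithinAt)
      (by simp only [sub_self, mul_zero, exp_zero, mul_one]; linarith)
      (fun s => ?_) (fun s _ hs => ?_) ht
    · simpa using (((hasDerivAt_id s).sub_const a).const_mul (K + 1)).exp.const_mul ε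
    · have hpos : 0 < ε * exp ((K + 1) * (s - a)) := by positivity
      have habs : |f s| = ε * exp ((K + 1) * (s - a)) := by
        rw [abs_of_neg (by linarith), ← hs]
      nlinarith [hbound s]
  by_contra! hneg
  have := hbarrier (-f t / (2 * exp ((K + 1) * (t - a)))) (div_pos (by linarith) (by positivity))
  rw [div_mul_eq_mul_div, mul_div_mul_right _ _ (exp_pos _).ne'] at this
  linarith

theorem nonpos_of_neg_mul_abs_le_deriv {f f' : ℝ → ℝ} {K a b : ℝ} (hK : 0 ≤ K)
    (hf : ∀ t, HasDerivAt f (f' t) t) (hbound : ∀ t, -(K * |f t|) ≤ f' t) (hb : f b ≤ 0) :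
    ∀ t ∈ Set.Icc a b, f t ≤ 0 := by
  intro t ht
  have hrev := nonneg_of_neg_mul_abs_le_deriv (f := fun s => -f (-s)) (f' := fun s => f' (-s))
    (a := -b) (b := -a) hK
    (fun s => by simpa [Function.comp_def] using ((hf (-s)).comp s (hasDerivAt_neg s)).fun_neg)
    (fun s => by simpa using hbound (-s)) (by simpa using hb) (-t)
    ⟨by linarith [ht.2], by linarith [ht.1]⟩
  simpa using hrev

theorem abs_sin_sq_sub_sin_sq_le (x y : ℝ) : |sin x ^ 2 - sin y ^ 2| ≤ 2 * |x - y| := by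
  rw [sq_sub_sq, abs_mul]
  have hsum : |sin x + sin y| ≤ 2 :=
    (abs_add_le _ _).trans (by linarith [abs_sin_le_one x, abs_sin_le_one y])
  exact mul_le_mul hsum (Real.abs_sin_sub_sin_le x y) (abs_nonneg _) zero_le_two

def pruferField (d x : ℝ) : ℝ := cos x ^ 2 + d * sin x ^ 2

theorem pruferField_of_sin_eq_zero (d : ℝ) {x : ℝ} (hx : sin x = 0) : pruferField d x = 1 := by
  rw [pruferField, cos_sq', hx]
  ring

theorem pruferField_one (x : ℝ) : pruferField 1 x = 1 := by
  simp [pruferField, cos_sq_add_sin_sq]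

theorem sub_mul_sin_sq_sub_le_pruferField_sub {d₁ d₂ K : ℝ} (x y : ℝ) (hK : |1 - d₂| ≤ K) :
    (d₁ - d₂) * sin x ^ 2 - 2 * K * |x - y| ≤ pruferField d₁ x - pruferField d₂ y := by
  have hsplit : pruferField d₁ x - pruferField d₂ y =
      (d₁ - d₂) * sin x ^ 2 - (1 - d₂) * (sin x ^ 2 - sin y ^ 2) := by
    simp only [pruferField, cos_sq']
    ring
  have hlip : |(1 - d₂) * (sin x ^ 2 - sin y ^ 2)| ≤ K * (2 * |x - y|) := by
    rw [abs_mul]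
    exact mul_le_mul hK (abs_sin_sq_sub_sin_sq_le x y) (abs_nonneg _) ((abs_nonneg _).trans hK)
  rw [hsplit]
  linarith [le_abs_self ((1 - d₂) * (sin x ^ 2 - sin y ^ 2))]

/-- `θ` is a Prüfer angle of `y'' + d y = 0`: `(y', y) = r (cos θ, sin θ)` with `r > 0`. -/
def IsPruferAngle (d θ : ℝ → ℝ) : Prop :=
  ∀ t, HasDerivAt θ (pruferField (d t) (θ t)) t

namespace IsPruferAngle

variable {d θ : ℝ → ℝ}

theorem const_add (c : ℝ) : IsPruferAngle 1 (fun t => c + t) := fun t => by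
  simpa [pruferField_one] using (hasDerivAt_id t).const_add c

theorem exists_sin_ne_zero (h : IsPruferAngle d θ) {a b : ℝ} (hab : a < b) :
    ∃ t ∈ Set.Ioo a b, sin (θ t) ≠ 0 := by
  by_contra! hsin
  have ht : (a + b) / 2 ∈ Set.Ioo a b := ⟨by linarith, by linarith⟩
  have hzero : (fun s => sin (θ s)) =ᶠ[nhds ((a + b) / 2)] fun _ => 0 := by
    filter_upwards [Ioo_mem_nhds ht.1 ht.2] with s hs using hsin s hs
  have hderiv := (h _).sin.unique ((hasDerivAt_const _ (0 : ℝ)).congr_of_eventuallyEq hzero)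
  rw [pruferField_of_sin_eq_zero _ (hsin _ ht), mul_one] at hderiv
  have := sin_sq_add_cos_sq (θ ((a + b) / 2))
  simp [hsin _ ht, hderiv] at this

theorem le_of_sin_eq_zero (h : IsPruferAngle d θ) {K m T : ℝ} (hK : ∀ t, |1 - d t| ≤ K)
    (hm : sin m = 0) (h0 : m ≤ θ 0) : ∀ t ∈ Set.Icc 0 T, m ≤ θ t := by
  have hK0 : 0 ≤ 2 * K := by linarith [(abs_nonneg _).trans (hK 0)]
  intro t ht
  have := nonneg_of_neg_mul_abs_le_deriv (f := fun s => θ s - m) hK0 (fun s => (h s).sub_const m)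
    (fun s => ?_) (by simpa using h0) t ht
  · linarith
  · have := sub_mul_sin_sq_sub_le_pruferField_sub (d₁ := d s) (θ s) m (hK s)
    rw [pruferField_of_sin_eq_zero _ hm, sub_self, zero_mul, zero_sub] at this
    linarith

theorem lt_of_coeff_lt {d₁ d₂ θ₁ θ₂ : ℝ → ℝ} {K T : ℝ} (h₁ : IsPruferAngle d₁ θ₁)
    (h₂ : IsPruferAngle d₂ θ₂) (hK : ∀ t, |1 - d₂ t| ≤ K) (hd : ∀ t, d₂ t < d₁ t)
    (h0 : θ₁ 0 = θ₂ 0) (hT : 0 < T) : θ₂ T < θ₁ T := by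
  have hK0 : 0 ≤ 2 * K := by linarith [(abs_nonneg _).trans (hK 0)]
  have hD : ∀ t, HasDerivAt (fun s => θ₁ s - θ₂ s)
      (pruferField (d₁ t) (θ₁ t) - pruferField (d₂ t) (θ₂ t)) t := fun t => (h₁ t).sub (h₂ t)
  have hgap := fun t => sub_mul_sin_sq_sub_le_pruferField_sub (d₁ := d₁ t) (θ₁ t) (θ₂ t) (hK t)
  have hbound : ∀ t, -(2 * K * |θ₁ t - θ₂ t|) ≤
      pruferField (d₁ t) (θ₁ t) - pruferField (d₂ t) (θ₂ t) := fun t => by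
    nlinarith [hgap t, hd t, sq_nonneg (sin (θ₁ t))]
  have hge := nonneg_of_neg_mul_abs_le_deriv hK0 hD hbound (a := 0) (b := T) (by rw [h0, sub_self])
  by_contra! hle
  have hle' := nonpos_of_neg_mul_abs_le_deriv hK0 hD hbound (a := 0) (by linarith)
  -- so `θ₁ = θ₂` on `[0, T]`, which forces `sin θ₁ = 0` on `(0, T)`
  obtain ⟨t, ht, hsin⟩ := h₁.exists_sin_ne_zero hT
  have hzero : (fun s => θ₁ s - θ₂ s) =ᶠ[nhds t] fun _ => 0 := by
    filter_upwards [Ioo_mem_nhds ht.1 ht.2] with s hs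
    exact le_antisymm (hle' s (Set.Ioo_subset_Icc_self hs)) (hge s (Set.Ioo_subset_Icc_self hs))
  have hderiv := (hD t).unique ((hasDerivAt_const t (0 : ℝ)).congr_of_eventuallyEq hzero)
  have := hgap t
  rw [hderiv, hzero.eq_of_nhds, abs_zero, mul_zero, sub_zero] at this
  have hpos : 0 < (d₁ t - d₂ t) * sin (θ₁ t) ^ 2 := mul_pos (by linarith [hd t]) (by positivity)
  linarith

theorem eq_add_pi (h : IsPruferAngle d θ) {K : ℝ} (hK : ∀ t, |1 - d t| ≤ K)
    (hd : ∀ t, d t < 1) (hn : ∃ n : ℤ, θ (2 * π) = θ 0 + π + n * (2 * π)) :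
    θ (2 * π) = θ 0 + π := by
  obtain ⟨n, hn⟩ := hn
  -- the multiple of `π` just below `θ 0` is a barrier from below
  set m : ℝ := ⌊θ 0 / π⌋ * π
  have hm0 : m ≤ θ 0 := (le_div_iff₀ pi_pos).1 (Int.floor_le _)
  have hm1 : θ 0 - π < m := by
    have := (div_lt_iff₀ pi_pos).1 (Int.lt_floor_add_one (θ 0 / π))
    linarith
  have hlow := h.le_of_sin_eq_zero hK (sin_int_mul_pi _) hm0 (2 * π) ⟨by positivity, le_rfl⟩
  have hup := (const_add (θ 0)).lt_of_coeff_lt h hK (fun t => by simpa using hd t) (by simp)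
    two_pi_pos
  have h1 : (-1 : ℝ) < n := by nlinarith [pi_pos]
  have h2 : (n : ℝ) < 1 := by nlinarith [pi_pos]
  have : n = 0 := by
    have h1' : (-1 : ℤ) < n := by exact_mod_cast h1
    have h2' : n < 1 := by exact_mod_cast h2
    omega
  simp [hn, this]

end IsPruferAngle

theorem exists_hasDerivAt_angle {z z' : ℝ → ℂ} (hz : ∀ t, HasDerivAt z (z' t) t)
    (hz' : Continuous z') (hne : ∀ t, z t ≠ 0) :
    ∃ θ : ℝ → ℝ, θ 0 = Complex.arg (z 0) ∧ (∀ t, HasDerivAt θ (z' t / z t).im t) ∧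
      ∀ t, z t = ‖z t‖ * Complex.exp (θ t * Complex.I) := by
  have hcont : Continuous fun t => z' t / z t :=
    hz'.div (continuous_iff_continuousAt.2 fun t => (hz t).continuousAt) hne
  -- a logarithm of `z / z 0`
  set L : ℝ → ℂ := fun t => ∫ s in (0 : ℝ)..t, z' s / z s
  have hL : ∀ t, HasDerivAt L (z' t / z t) t := fun t =>
    intervalIntegral.integral_hasDerivAt_right (hcont.intervalIntegrable _ _)
      (hcont.stronglyMeasurableAtFilter _ _) hcont.continuousAt
  have hexp : ∀ t, z t = z 0 * Complex.exp (L t) := by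
    have hderiv : ∀ t, HasDerivAt (fun s => z s * Complex.exp (-L s)) 0 t := fun t => by
      refine ((hz t).fun_mul (hL t).fun_neg.cexp).congr_deriv ?_
      field_simp [hne t]
      ring
    intro t
    have := is_const_of_deriv_eq_zero (fun s => (hderiv s).differentiableAt)
      (fun s => (hderiv s).deriv) t 0
    simp only [L, intervalIntegral.integral_same, neg_zero, Complex.exp_zero, mul_one] at this
    rw [← this, mul_assoc, ← Complex.exp_add, neg_add_cancel, Complex.exp_zero, mul_one]
  refine ⟨fun t => Complex.arg (z 0) + (L t).im, by simp [L], fun t => ?_, fun t => ?_⟩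
  · exact ((Complex.imCLM.hasFDerivAt.comp_hasDerivAt t (hL t))).const_add _
  · rw [hexp t, norm_mul, Complex.norm_exp, Complex.ofReal_mul, Complex.ofReal_exp, mul_assoc,
      ← Complex.exp_add]
    nth_rewrite 1 [← Complex.norm_mul_exp_arg_mul_I (z 0)]
    rw [mul_assoc, ← Complex.exp_add]
    congr 2
    apply Complex.ext <;> simp

theorem exists_isPruferAngle {d x y : ℝ → ℝ} (hd : Continuous d)
    (hx : ∀ t, HasDerivAt x (-(d t * y t)) t) (hy : ∀ t, HasDerivAt y (x t) t)
    (hne : ∀ t, (x t : ℂ) + y t * Complex.I ≠ 0) :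
    ∃ θ, IsPruferAngle d θ ∧ θ 0 = Complex.arg (x 0 + y 0 * Complex.I) ∧
      ∀ t, (x t : ℂ) + y t * Complex.I =
        ‖(x t : ℂ) + y t * Complex.I‖ * Complex.exp (θ t * Complex.I) := by
  have hxc : Continuous x := continuous_iff_continuousAt.2 fun t => (hx t).continuousAt
  have hyc : Continuous y := continuous_iff_continuousAt.2 fun t => (hy t).continuousAt
  obtain ⟨θ, h0, hθ, hpolar⟩ := exists_hasDerivAt_angle (z := fun t => (x t : ℂ) + y t * Complex.I)
    (z' := fun t => ((-(d t * y t) : ℝ) : ℂ) + (x t : ℂ) * Complex.I)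
    (fun t => (hx t).ofReal_comp.add ((hy t).ofReal_comp.mul_const Complex.I)) (by fun_prop) hne
  refine ⟨θ, fun t => ?_, h0, hpolar⟩
  convert hθ t using 1
  set r := ‖(x t : ℂ) + y t * Complex.I‖
  have hr : 0 < r := norm_pos_iff.2 (hne t)
  have hxr : x t = r * cos (θ t) := by
    simpa [Complex.exp_ofReal_mul_I_re] using congrArg Complex.re (hpolar t)
  have hyr : y t = r * sin (θ t) := by
    simpa [Complex.exp_ofReal_mul_I_im] using congrArg Complex.im (hpolar t)
  simp only [Complex.div_im, Complex.normSq_apply, Complex.add_re, Complex.add_im,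
    Complex.ofReal_re, Complex.ofReal_im, Complex.mul_re, Complex.mul_im, Complex.I_re,
    Complex.I_im, mul_zero, mul_one, sub_zero, zero_add, add_zero]
  have hden : r * cos (θ t) * (r * cos (θ t)) + r * sin (θ t) * (r * sin (θ t)) = r ^ 2 := by
    linear_combination r ^ 2 * sin_sq_add_cos_sq (θ t)
  rw [hxr, hyr, pruferField, div_sub_div_same, hden, eq_div_iff (by positivity)]
  ring

theorem exists_int_eq_add_pi_of_eq_neg {z : ℝ → ℂ} {θ : ℝ → ℝ} {T : ℝ}
    (hpolar : ∀ t, z t = ‖z t‖ * Complex.exp (θ t * Complex.I)) (h0 : z 0 ≠ 0)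
    (hT : z T = -z 0) : ∃ n : ℤ, θ T = θ 0 + π + n * (2 * π) := by
  have hr : (‖z 0‖ : ℂ) ≠ 0 := by simpa using h0
  have hexp : Complex.exp (θ T * Complex.I) = Complex.exp ((θ 0 + π : ℝ) * Complex.I) := by
    apply mul_left_cancel₀ hr
    calc (‖z 0‖ : ℂ) * Complex.exp (θ T * Complex.I) = z T := by rw [hpolar T, hT, norm_neg]
      _ = -z 0 := hT
      _ = ‖z 0‖ * Complex.exp ((θ 0 + π : ℝ) * Complex.I) := by
        conv_lhs => rw [hpolar 0]
        push_cast
        rw [add_mul, Complex.exp_add, Complex.exp_pi_mul_I]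
        ring
  obtain ⟨n, hn⟩ := Complex.exp_eq_exp_iff_exists_int.1 hexp
  refine ⟨n, ?_⟩
  simpa [add_mul, mul_assoc] using congrArg Complex.im hn

def hillCoeff (β e t : ℝ) : ℝ := 1 - β / (1 + e * cos t)

section HillCoeff

variable {β e : ℝ}

theorem one_add_mul_cos_pos (he : e ∈ Set.Ico (0 : ℝ) 1) (t : ℝ) : 0 < 1 + e * cos t := by
  nlinarith [neg_one_le_cos t, cos_le_one t, he.1, he.2]

theorem continuous_hillCoeff (he : e ∈ Set.Ico (0 : ℝ) 1) : Continuous (hillCoeff β e) :=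
  continuous_const.sub <| continuous_const.div (by fun_prop) fun t => (one_add_mul_cos_pos he t).ne'

theorem abs_one_sub_hillCoeff_le (he : e ∈ Set.Ico (0 : ℝ) 1) (hβ : 0 ≤ β) (t : ℝ) :
    |1 - hillCoeff β e t| ≤ β / (1 - e) := by
  have hpos := one_add_mul_cos_pos he t
  rw [hillCoeff, sub_sub_cancel, abs_of_nonneg (div_nonneg hβ hpos.le)]
  exact div_le_div_of_nonneg_left hβ (by linarith [he.2])
    (by nlinarith [neg_one_le_cos t, he.1])

theorem hillCoeff_lt_hillCoeff (he : e ∈ Set.Ico (0 : ℝ) 1) {β' : ℝ} (hβ : β < β') (t : ℝ) :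
    hillCoeff β' e t < hillCoeff β e t := by
  have := div_lt_div_of_pos_right hβ (one_add_mul_cos_pos he t)
  simp only [hillCoeff]
  linarith

theorem hillCoeff_lt_one (he : e ∈ Set.Ico (0 : ℝ) 1) (hβ : 0 < β) (t : ℝ) :
    hillCoeff β e t < 1 := by
  simpa [hillCoeff] using hillCoeff_lt_hillCoeff he hβ t

end HillCoeff

theorem Jmat_mul_Bmat_mul (β e t : ℝ) (X : Matrix (Fin 2) (Fin 2) ℝ) :
    Jmat * Bmat β e t * X =
      !![-(hillCoeff β e t * X 1 0), -(hillCoeff β e t * X 1 1); X 0 0, X 0 1] := by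
  ext i j
  fin_cases i <;> fin_cases j <;>
    simp [Jmat, Bmat, hillCoeff, Matrix.mul_apply, Fin.sum_univ_two, sub_mul]

namespace IsFundSol

variable {β e : ℝ} {γ : ℝ → Matrix (Fin 2) (Fin 2) ℝ}

theorem hasDerivAt_apply_zero (h : IsFundSol β e γ) (t : ℝ) (j : Fin 2) :
    HasDerivAt (fun s => γ s 0 j) (-(hillCoeff β e t * γ t 1 j)) t := by
  have := h.2 t 0 j
  rw [Jmat_mul_Bmat_mul] at this
  fin_cases j <;> simpa using this

theorem hasDerivAt_apply_one (h : IsFundSol β e γ) (t : ℝ) (j : Fin 2) :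
    HasDerivAt (fun s => γ s 1 j) (γ t 0 j) t := by
  have := h.2 t 1 j
  rw [Jmat_mul_Bmat_mul] at this
  fin_cases j <;> simpa using this

theorem det_eq_one (h : IsFundSol β e γ) (t : ℝ) : (γ t).det = 1 := by
  have hderiv : ∀ t, HasDerivAt (fun s => (γ s).det) 0 t := fun t => by
    simp only [Matrix.det_fin_two]
    refine (((h.hasDerivAt_apply_zero t 0).fun_mul (h.hasDerivAt_apply_one t 1)).fun_sub
      ((h.hasDerivAt_apply_zero t 1).fun_mul (h.hasDerivAt_apply_one t 0))).congr_deriv ?_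
    ring
  rw [is_const_of_deriv_eq_zero (fun s => (hderiv s).differentiableAt)
    (fun s => (hderiv s).deriv) t 0, h.1, Matrix.det_one]

theorem hasDerivAt_mulVec_zero (h : IsFundSol β e γ) (w : Fin 2 → ℝ) (t : ℝ) :
    HasDerivAt (fun s => (γ s *ᵥ w) 0) (-(hillCoeff β e t * (γ t *ᵥ w) 1)) t := by
  simp only [Matrix.mulVec, dotProduct, Fin.sum_univ_two]
  refine (((h.hasDerivAt_apply_zero t 0).mul_const (w 0)).fun_add
    ((h.hasDerivAt_apply_zero t 1).mul_const (w 1))).congr_deriv ?_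
  ring

theorem hasDerivAt_mulVec_one (h : IsFundSol β e γ) (w : Fin 2 → ℝ) (t : ℝ) :
    HasDerivAt (fun s => (γ s *ᵥ w) 1) ((γ t *ᵥ w) 0) t := by
  simp only [Matrix.mulVec, dotProduct, Fin.sum_univ_two]
  exact ((h.hasDerivAt_apply_one t 0).mul_const (w 0)).fun_add
    ((h.hasDerivAt_apply_one t 1).mul_const (w 1))

theorem mulVec_ne_zero (h : IsFundSol β e γ) {w : Fin 2 → ℝ} (hw : w ≠ 0) (t : ℝ) :
    γ t *ᵥ w ≠ 0 := fun h0 =>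
  hw <| Matrix.mulVec_injective_iff_isUnit.2
    ((Matrix.isUnit_iff_isUnit_det _).2 (by simp [h.det_eq_one t]))
    (h0.trans (Matrix.mulVec_zero _).symm)

theorem exists_isPruferAngle_of_mulVec_eq_neg (he : e ∈ Set.Ico (0 : ℝ) 1) (hβ : 0 < β)
    (h : IsFundSol β e γ) {w : Fin 2 → ℝ} (hw : w ≠ 0) (hev : γ (2 * π) *ᵥ w = -w) :
    ∃ θ, IsPruferAngle (hillCoeff β e) θ ∧ θ 0 = Complex.arg (w 0 + w 1 * Complex.I) ∧
      θ (2 * π) = θ 0 + π := by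
  set z : ℝ → ℂ := fun t => ((γ t *ᵥ w) 0 : ℂ) + (γ t *ᵥ w) 1 * Complex.I
  have hz : ∀ t, z t ≠ 0 := fun t hzt => h.mulVec_ne_zero hw t <| by
    ext i
    fin_cases i
    · simpa [z] using congrArg Complex.re hzt
    · simpa [z] using congrArg Complex.im hzt
  have hz0 : z 0 = w 0 + w 1 * Complex.I := by simp [z, h.1]
  obtain ⟨θ, hθ, h0, hpolar⟩ := exists_isPruferAngle (continuous_hillCoeff he)
    (h.hasDerivAt_mulVec_zero w) (h.hasDerivAt_mulVec_one w) hz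
  refine ⟨θ, hθ, by rw [h0, ← hz0], hθ.eq_add_pi (abs_one_sub_hillCoeff_le he hβ.le)
    (hillCoeff_lt_one he hβ) (exists_int_eq_add_pi_of_eq_neg hpolar (hz 0) ?_)⟩
  simp only [hev, h.1, Pi.neg_apply, Complex.ofReal_neg, neg_mul, one_mulVec, neg_add_rev]
  ring

end IsFundSol

theorem IsFundSol.false_of_mulVec_eq_neg_of_lt {β β' e : ℝ} (he : e ∈ Set.Ico (0 : ℝ) 1)
    (hβ : 0 < β) (hββ' : β < β') {γ γ' : ℝ → Matrix (Fin 2) (Fin 2) ℝ}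
    (hγ : IsFundSol β e γ) (hγ' : IsFundSol β' e γ') {w : Fin 2 → ℝ} (hw : w ≠ 0)
    (hev : γ (2 * π) *ᵥ w = -w) (hev' : γ' (2 * π) *ᵥ w = -w) : False := by
  obtain ⟨θ, hθ, h0, h2π⟩ := hγ.exists_isPruferAngle_of_mulVec_eq_neg he hβ hw hev
  obtain ⟨θ', hθ', h0', h2π'⟩ :=
    hγ'.exists_isPruferAngle_of_mulVec_eq_neg he (hβ.trans hββ') hw hev'
  have := hθ.lt_of_coeff_lt hθ' (abs_one_sub_hillCoeff_le he (hβ.trans hββ').le)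
    (hillCoeff_lt_hillCoeff he hββ') (h0.trans h0'.symm) two_pi_pos
  linarith

theorem IsFundSol.monodromy_ne_neg_one {β β' e : ℝ} (he : e ∈ Set.Ico (0 : ℝ) 1) (hβ : 0 < β)
    (hβ' : 0 < β') (hββ' : β ≠ β') {γ γ' : ℝ → Matrix (Fin 2) (Fin 2) ℝ}
    (hγ : IsFundSol β e γ) (hγ' : IsFundSol β' e γ') (hdeg' : (γ' (2 * π) + 1).det = 0) :
    γ (2 * π) ≠ -1 := by
  intro hM
  obtain ⟨v, hv, hAv⟩ := Matrix.exists_mulVec_eq_zero_iff.2 hdeg'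
  have hev' : γ' (2 * π) *ᵥ v = -v :=
    eq_neg_of_add_eq_zero_left (by rwa [Matrix.add_mulVec, Matrix.one_mulVec] at hAv)
  have hev : γ (2 * π) *ᵥ v = -v := by rw [hM, Matrix.neg_mulVec, Matrix.one_mulVec]
  rcases hββ'.lt_or_gt with h | h
  · exact hγ.false_of_mulVec_eq_neg_of_lt he hβ h hγ' hv hev hev'
  · exact hγ'.false_of_mulVec_eq_neg_of_lt he hβ' h hγ hv hev' hev

namespace Matrix

theorem det_add_one_fin_two {R : Type*} [CommRing R] (A : Matrix (Fin 2) (Fin 2) R) :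
    (A + 1).det = A.det + A.trace + 1 := by
  simp only [det_fin_two, trace_fin_two, add_apply, one_apply_eq, one_apply_ne, ne_eq,
    zero_ne_one, one_ne_zero, not_false_eq_true, add_zero]
  ring

theorem sq_add_one_eq_zero_fin_two {R : Type*} [CommRing R] [Nontrivial R]
    {A : Matrix (Fin 2) (Fin 2) R} (htr : A.trace = -2) (hdet : A.det = 1) : (A + 1) ^ 2 = 0 := by
  have := A.aeval_self_charpoly
  rw [charpoly_fin_two, htr, hdet] at this
  simp only [map_neg, neg_mul, sub_neg_eq_add, map_one, map_add, map_pow, Polynomial.aeval_X,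
    map_mul, map_ofNat] at this
  rw [← this]
  noncomm_ring

section Unipotent

variable {K n : Type*} [Field K] [Fintype n] [DecidableEq n] {A : Matrix n n K}

theorem eq_neg_one_of_det_sub_smul_one_eq_zero (hA : (A + 1) ^ 2 = 0) {μ : K}
    (hμ : (A - μ • 1).det = 0) : μ = -1 := by
  obtain ⟨v, hv, hAv⟩ := exists_mulVec_eq_zero_iff.2 hμ
  have hN : (A + 1) *ᵥ v = (μ + 1) • v := by
    rw [sub_mulVec, smul_mulVec, one_mulVec, sub_eq_zero] at hAv
    rw [add_mulVec, one_mulVec, hAv, add_smul, one_smul]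
  have hsq : (μ + 1) ^ 2 • v = 0 := by
    rw [sq, mul_smul, ← hN, ← mulVec_smul, ← hN, mulVec_mulVec, ← sq, hA, zero_mulVec]
  have := pow_eq_zero_iff two_ne_zero |>.1 ((smul_eq_zero.1 hsq).resolve_right hv)
  exact eq_neg_of_add_eq_zero_left this

theorem eq_neg_one_of_eq_mul_diagonal_mul_inv (hA : (A + 1) ^ 2 = 0) {P : Matrix n n K}
    {dg : n → K} (hP : IsUnit P.det) (hdiag : A = P * diagonal dg * P⁻¹) : A = -1 := by
  have hdg : ∀ i, dg i = -1 := fun i => eq_neg_one_of_det_sub_smul_one_eq_zero hA <| by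
    have hconj : A - dg i • 1 = P * diagonal (fun j => dg j - dg i) * P⁻¹ := by
      rw [← diagonal_sub, ← smul_one_eq_diagonal, mul_sub, sub_mul, mul_smul_comm, mul_one,
        smul_mul_assoc, mul_nonsing_inv _ hP, ← hdiag]
    rw [hconj, det_conj ((isUnit_iff_isUnit_det P).2 hP), det_diagonal]
    exact Finset.prod_eq_zero (Finset.mem_univ i) (sub_self _)
  have hD : diagonal dg = -1 := by
    rw [funext hdg, ← diagonal_one, ← diagonal_neg]
  rw [hdiag, hD, mul_neg_one, neg_mul, mul_nonsing_inv _ hP]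

end Unipotent

attribute [local instance] Matrix.normedSpace

theorem not_exists_norm_pow_le {n : Type*} [Fintype n] [DecidableEq n] {A : Matrix n n ℝ}
    (hA : (A + 1) ^ 2 = 0) (hne : A ≠ -1) : ¬∃ C : ℝ, ∀ k : ℕ, ‖A ^ k‖ ≤ C := by
  set N := A + 1 with hNdef
  have hN : N ≠ 0 := fun h => hne (eq_neg_of_add_eq_zero_left h)
  have hpow : ∀ k : ℕ, A ^ k = (-1 : ℝ) ^ k • (1 - (k : ℝ) • N) := by
    have hA' : A = N - 1 := by rw [hNdef, add_sub_cancel_right]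
    have hNN : N * N = 0 := by rw [← sq, hA]
    intro k
    induction k with
    | zero => simp
    | succ k ih =>
      rw [pow_succ, ih, hA']
      simp only [smul_mul_assoc, sub_mul, mul_sub, one_mul, mul_one, hNN]
      push_cast
      module
  rintro ⟨C, hC⟩
  obtain ⟨k, hk⟩ := exists_nat_gt ((C + ‖(1 : Matrix n n ℝ)‖) / ‖N‖)
  rw [div_lt_iff₀ (norm_pos_iff.2 hN)] at hk
  have hlow : (k : ℝ) * ‖N‖ - ‖(1 : Matrix n n ℝ)‖ ≤ ‖A ^ k‖ := by
    have hsign : ‖(-1 : ℝ) ^ k‖ = 1 := by simp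
    rw [hpow, norm_smul, hsign, one_mul, norm_sub_rev]
    calc (k : ℝ) * ‖N‖ - ‖(1 : Matrix n n ℝ)‖ = ‖(k : ℝ) • N‖ - ‖(1 : Matrix n n ℝ)‖ := by
          rw [norm_smul, Real.norm_natCast]
      _ ≤ ‖(k : ℝ) • N - 1‖ := norm_sub_norm_le _ _
  linarith [hC k]

end Matrix

/-- on the two `-1`-degenerate curves, the monodromy matrix `M` has `-1` as a
double eigenvalue (`tr M = -2`, `det M = 1`), `M ≠ -I₂`, `M` is not diagonalizable over `ℂ`;
it is spectrally stable but linearly unstable. -/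
theorem stmt_16 (e : ℝ) (he : e ∈ Set.Ico (0 : ℝ) 1)
    (β₁ β₂ : ℝ) (hβ₁ : β₁ ∈ Set.Ioo (0 : ℝ) 1) (hβ₂ : β₂ ∈ Set.Ioo (0 : ℝ) 1)
    (hlt : β₁ < β₂)
    (γ : ℝ → ℝ → Matrix (Fin 2) (Fin 2) ℝ)
    (hγ : ∀ β ∈ Set.Icc (0 : ℝ) 1, IsFundSol β e (γ β))
    (hdeg : ∀ β ∈ Set.Icc (0 : ℝ) 1,
      (Matrix.det (γ β (2 * π) + 1) = 0 ↔ β = β₁ ∨ β = β₂)) :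
    ∀ b ∈ ({β₁, β₂} : Set ℝ),
      Matrix.trace (γ b (2 * π)) = -2 ∧
      Matrix.det (γ b (2 * π)) = 1 ∧
      γ b (2 * π) ≠ -1 ∧
      ¬(∃ (P : Matrix (Fin 2) (Fin 2) ℂ) (dg : Fin 2 → ℂ), IsUnit P.det ∧
          (γ b (2 * π)).map (fun x => (x : ℂ)) = P * Matrix.diagonal dg * P⁻¹) ∧
      (∀ μ : ℂ, Matrix.det ((γ b (2 * π)).map (fun x => (x : ℂ)) - μ • 1) = 0 → ‖μ‖ = 1) ∧
      ¬∃ C : ℝ, ∀ n : ℕ, ‖γ b (2 * π) ^ n‖ ≤ C := by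
  intro b hb
  have hbIcc : b ∈ Set.Icc (0 : ℝ) 1 := by
    rcases hb with rfl | rfl <;> exact Set.Ioo_subset_Icc_self ‹_›
  have hdet : (γ b (2 * π)).det = 1 := (hγ b hbIcc).det_eq_one _
  have htr : (γ b (2 * π)).trace = -2 := by
    have := (hdeg b hbIcc).2 hb
    rw [Matrix.det_add_one_fin_two, hdet] at this
    linear_combination this
  have hsq := Matrix.sq_add_one_eq_zero_fin_two htr hdet
  have hne : γ b (2 * π) ≠ -1 := by
    have hγ₁ := hγ β₁ (Set.Ioo_subset_Icc_self hβ₁)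
    have hγ₂ := hγ β₂ (Set.Ioo_subset_Icc_self hβ₂)
    rcases hb with rfl | rfl
    · exact hγ₁.monodromy_ne_neg_one he hβ₁.1 hβ₂.1 hlt.ne hγ₂
        ((hdeg β₂ (Set.Ioo_subset_Icc_self hβ₂)).2 (Or.inr rfl))
    · exact hγ₂.monodromy_ne_neg_one he hβ₂.1 hβ₁.1 hlt.ne' hγ₁
        ((hdeg β₁ (Set.Ioo_subset_Icc_self hβ₁)).2 (Or.inl rfl))
  have hsqC : ((γ b (2 * π)).map (fun x => (x : ℂ)) + 1) ^ 2 = 0 := by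
    have := congrArg Complex.ofRealHom.mapMatrix hsq
    rwa [map_pow, map_add, map_one, map_zero] at this
  refine ⟨htr, hdet, hne, ?_, fun μ hμ => ?_, Matrix.not_exists_norm_pow_le hsq hne⟩
  · rintro ⟨P, dg, hP, hdiag⟩
    refine hne (Matrix.map_injective (f := Complex.ofRealHom) Complex.ofReal_injective ?_)
    change Complex.ofRealHom.mapMatrix _ = Complex.ofRealHom.mapMatrix _
    rw [map_neg, map_one]
    exact Matrix.eq_neg_one_of_eq_mul_diagonal_mul_inv hsqC hP hdiag
  · simp [Matrix.eq_neg_one_of_det_sub_smul_one_eq_zero hsqC hμ]
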